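/- Let P be a finite collection of subgroups of a finitely generated group G such that every P ∈ P has finite index in Comm_G(P), and let P* be a refinement of P. Then the identity map on G is a quasi-isometry of pairs (G,P) → (G,P*). -/

import Mathlib

open scoped Pointwise

variable {G : Type*} [Group G]

/-- Word distance between `g` and `h` with respect to a generating set `S` (values in `ℕ∞`). -/
noncomputable def wordDist (S : Set G) (g h : G) : ℕ∞ :=
  sInf {n : ℕ∞ | ∃ l : List G, (∀ x ∈ l, x ∈ S ∨ x⁻¹ ∈ S) ∧ l.prod = g⁻¹ * h ∧ (l.length : ℕ∞) = n}

/-- Closed `r`-neighbourhood of a subset of `G` in the word metric. -/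
def nbhd (S : Set G) (r : ℕ∞) (A : Set G) : Set G := {g | ∃ a ∈ A, wordDist S g a ≤ r}

/-- Hausdorff distance between subsets of `G` in the word metric. -/
noncomputable def hdist (S : Set G) (A B : Set G) : ℕ∞ :=
  sInf {r : ℕ∞ | A ⊆ nbhd S r B ∧ B ⊆ nbhd S r A}

/-- The conjugate subgroup `g P g⁻¹`. -/
def conjSub (g : G) (P : Subgroup G) : Subgroup G := ConjAct.toConjAct g • P

/-- The collection of all left cosets `gP`, `g ∈ G`, `P ∈ Ps`, as subsets of `G`. -/
def cosetsOf (Ps : Set (Subgroup G)) : Set (Set G) :=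
  {A | ∃ (g : G) (P : Subgroup G), P ∈ Ps ∧ A = g • (P : Set G)}

/-- A collection of subgroups is almost malnormal if any conjugate of a member meets any
member in a finite subgroup, except for the trivial configurations. -/
def AlmostMalnormal (Ps : Set (Subgroup G)) : Prop :=
  ∀ P ∈ Ps, ∀ P' ∈ Ps, ∀ g : G,
    ((conjSub g P ⊓ P' : Subgroup G) : Set G).Finite ∨ (P = P' ∧ g ∈ P)

/-- A collection of subgroups is reduced if commensurability of a member with a conjugate of a
member only happens trivially. -/
def Reduced (Ps : Set (Subgroup G)) : Prop :=
  ∀ P ∈ Ps, ∀ Q ∈ Ps, ∀ g : G, Subgroup.Commensurable P (conjSub g Q) → P = Q ∧ g ∈ P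

/-- `Pstar` is a refinement of `Ps`: a set of representatives of conjugacy classes of the
collection of commensurators of conjugates of members of `Ps`. -/
def IsRefinement (Ps Pstar : Set (Subgroup G)) : Prop :=
  (∀ Q ∈ Pstar, ∃ P ∈ Ps, ∃ g : G, Q = Subgroup.Commensurable.commensurator (conjSub g P)) ∧
  (∀ P ∈ Ps, ∀ g : G, ∃ Q ∈ Pstar, ∃ h : G,
      conjSub h Q = Subgroup.Commensurable.commensurator (conjSub g P)) ∧
  (∀ Q ∈ Pstar, ∀ Q' ∈ Pstar, (∃ h : G, conjSub h Q = Q') → Q = Q')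

/-- `q` is an `(L, C, M)`-quasi-isometry of pairs `(G, Ps) → (H, Qs)`: an `(L, C)`-quasi-isometry
of the groups (with respect to the word metrics of `S` and `T`) such that the relation
`{(A, B) : Hdist(q(A), B) < M}` on left cosets projects surjectively to both factors. -/
def IsQIPair {H : Type*} [Group H] (S : Set G) (T : Set H) (q : G → H)
    (Ps : Set (Subgroup G)) (Qs : Set (Subgroup H)) (L C M : ℕ) : Prop :=
  (∀ a b : G, wordDist T (q a) (q b) ≤ (L : ℕ∞) * wordDist S a b + (C : ℕ∞) ∧
      wordDist S a b ≤ (L : ℕ∞) * wordDist T (q a) (q b) + (C : ℕ∞)) ∧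
  (∀ h : H, ∃ g : G, wordDist T (q g) h ≤ (C : ℕ∞)) ∧
  (∀ A ∈ cosetsOf Ps, ∃ B ∈ cosetsOf Qs, hdist T (q '' A) B < (M : ℕ∞)) ∧
  (∀ B ∈ cosetsOf Qs, ∃ A ∈ cosetsOf Ps, hdist T (q '' A) B < (M : ℕ∞))

/-! Each `P ∈ Ps` has finite index in `Comm_G(P)`, which is a conjugate `h Q h⁻¹` of some `Q ∈ Pstar`;
hence every coset `g P` is at bounded Hausdorff distance from `g h Q`, and symmetrically every coset
of a member of `Pstar` is close to a coset of a member of `Ps`. The bounds are uniform because `Ps`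
is finite and `Pstar`, a set of conjugacy representatives indexed by `Ps`, is finite too. -/

open Subgroup.Commensurable Filter

section WordMetric

variable {S : Set G}

lemma wordDist_eq_wordDist_one (g h : G) :
    wordDist S g h = wordDist S 1 (g⁻¹ * h) := by
  simp [wordDist]

lemma wordDist_self (g : G) : wordDist S g g = 0 :=
  nonpos_iff_eq_zero.1 <| sInf_le ⟨[], by simp, by simp, by simp⟩

lemma wordDist_one_ne_top (hgen : Subgroup.closure S = ⊤) (g : G) : wordDist S 1 g ≠ ⊤ := by
  have hg : g ∈ Submonoid.closure (S ∪ S⁻¹) := by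
    rw [← Subgroup.closure_toSubmonoid, hgen]
    exact Subgroup.mem_top g
  obtain ⟨l, hl, hprod⟩ := Submonoid.exists_list_of_mem_closure hg
  refine ne_top_of_le_ne_top (ENat.natCast_ne_top l.length)
    (sInf_le ⟨l, fun x hx => ?_, by simp [hprod], rfl⟩)
  simpa using hl x hx

lemma exists_forall_wordDist_one_le (hgen : Subgroup.closure S = ⊤) {F : Set G}
    (hF : F.Finite) : ∃ n : ℕ, ∀ x ∈ F, wordDist S 1 x ≤ n := by
  obtain ⟨n, hn⟩ := (hF.image fun x => (wordDist S 1 x).toNat).bddAbove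
  refine ⟨n, fun x hx => ?_⟩
  rw [← ENat.natCast_toNat (wordDist_one_ne_top hgen x)]
  exact_mod_cast hn ⟨x, hx, rfl⟩

lemma hdist_le_of_forall_exists {A B : Set G} {r : ℕ∞}
    (hAB : ∀ a ∈ A, ∃ b ∈ B, wordDist S a b ≤ r) (hBA : ∀ b ∈ B, ∃ a ∈ A, wordDist S b a ≤ r) :
    hdist S A B ≤ r :=
  sInf_le ⟨hAB, hBA⟩

end WordMetric

section Conjugation

lemma mem_conjSub {g x : G} {P : Subgroup G} : x ∈ conjSub g P ↔ g⁻¹ * x * g ∈ P := by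
  simp [conjSub, Subgroup.mem_pointwise_smul_iff_inv_smul_mem, ConjAct.smul_def]

lemma conjSub_one (P : Subgroup G) : conjSub 1 P = P := by
  simp [conjSub]

lemma conjSub_conjSub (a b : G) (P : Subgroup G) :
    conjSub a (conjSub b P) = conjSub (a * b) P := by
  simp [conjSub, mul_smul]

lemma le_commensurator (P : Subgroup G) : P ≤ commensurator P := fun p hp => by
  rw [commensurator_mem_iff, Subgroup.conjAct_pointwise_smul_eq_self (Subgroup.le_normalizer hp)]

lemma commensurator_conjSub (g : G) (P : Subgroup G) :
    commensurator (conjSub g P) = conjSub g (commensurator P) := by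
  ext x
  rw [mem_conjSub, commensurator_mem_iff, commensurator_mem_iff,
    commensurable_conj (ConjAct.toConjAct g⁻¹)]
  simp only [conjSub, ← mul_smul, ← map_mul, inv_mul_cancel, map_one, one_smul, mul_assoc]

lemma conjSub_inv_eq_commensurator {P Q : Subgroup G} {g : G}
    (h : Q = commensurator (conjSub g P)) : conjSub g⁻¹ Q = commensurator P := by
  rw [h, commensurator_conjSub, conjSub_conjSub, inv_mul_cancel, conjSub_one]

end Conjugation

lemma exists_finset_forall_mul_mem {H K : Subgroup G} (h : H.relIndex K ≠ 0) :
    ∃ T : Finset G, ∀ k ∈ K, ∃ t ∈ T, k * t ∈ H := by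
  have := Subgroup.isFiniteRelIndex_iff_finiteIndex.1 ⟨h⟩
  refine ⟨(Set.finite_range fun q : K ⧸ H.subgroupOf K => ((q.out : K) : G)).toFinset,
    fun k hk => ?_⟩
  obtain ⟨p, hp⟩ := QuotientGroup.mk_out_eq_mul (H.subgroupOf K) ⟨k, hk⟩⁻¹
  refine ⟨_, Set.Finite.mem_toFinset _ |>.2 ⟨QuotientGroup.mk ⟨k, hk⟩⁻¹, rfl⟩, ?_⟩
  simpa [hp] using Subgroup.mem_subgroupOf.1 p.2

/-- Points of `g H` move by `c`, and points of `g c K` by `c⁻¹ t` with `t` in a finite set of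
representatives of the right cosets of `H` in `c K c⁻¹`. -/
lemma eventually_forall_hdist_smul_lt {S : Set G} (hgen : Subgroup.closure S = ⊤)
    {H K : Subgroup G} {c : G} (hle : H ≤ conjSub c K) (hidx : H.relIndex (conjSub c K) ≠ 0) :
    ∀ᶠ M : ℕ in atTop, ∀ g : G, hdist S (g • (H : Set G)) ((g * c) • (K : Set G)) < M := by
  obtain ⟨T, hT⟩ := exists_finset_forall_mul_mem hidx
  obtain ⟨r, hr⟩ := exists_forall_wordDist_one_le hgen
    ((T.finite_toSet.image (c⁻¹ * ·)).insert c)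
  have hbound : ∀ g : G, hdist S (g • (H : Set G)) ((g * c) • (K : Set G)) ≤ r := by
    intro g
    refine hdist_le_of_forall_exists ?_ ?_
    · rintro _ ⟨p, hp, rfl⟩
      refine ⟨(g * c) * (c⁻¹ * p * c), ⟨_, mem_conjSub.1 (hle hp), rfl⟩, ?_⟩
      rw [wordDist_eq_wordDist_one]
      convert hr c (Set.mem_insert _ _) using 2
      simp only [smul_eq_mul]
      group
    · rintro _ ⟨k, hk, rfl⟩
      obtain ⟨t, ht, hkt⟩ := hT (c * k * c⁻¹) (mem_conjSub.2 (by simpa [mul_assoc] using hk))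
      refine ⟨g * (c * k * c⁻¹ * t), ⟨_, hkt, rfl⟩, ?_⟩
      rw [wordDist_eq_wordDist_one]
      convert hr (c⁻¹ * t) (Set.mem_insert_of_mem _ ⟨t, ht, rfl⟩) using 2
      simp only [smul_eq_mul]
      group
  filter_upwards [eventually_gt_atTop r] with M hM g
  exact (hbound g).trans_lt (by exact_mod_cast hM)

namespace IsRefinement

variable {Ps Pstar : Set (Subgroup G)}

lemma finite (href : IsRefinement Ps Pstar) (hPs : Ps.Finite) : Pstar.Finite := by
  choose! P hP g hg using href.1
  refine Set.Finite.of_finite_image (hPs.subset (Set.image_subset_iff.2 hP)) ?_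
  intro Q hQ Q' hQ' hPQ
  have hconj : conjSub (g Q)⁻¹ Q = conjSub (g Q')⁻¹ Q' := by
    rw [conjSub_inv_eq_commensurator (hg Q hQ), conjSub_inv_eq_commensurator (hg Q' hQ'), hPQ]
  refine href.2.2 Q hQ Q' hQ' ⟨g Q' * (g Q)⁻¹, ?_⟩
  rw [← conjSub_conjSub, hconj, conjSub_conjSub, mul_inv_cancel, conjSub_one]

lemma eventually_forall_exists_hdist_smul_lt (href : IsRefinement Ps Pstar) {S : Set G}
    (hgen : Subgroup.closure S = ⊤) {P : Subgroup G} (hP : P ∈ Ps)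
    (hfi : P.relIndex (commensurator P) ≠ 0) :
    ∀ᶠ M : ℕ in atTop, ∀ g : G, ∃ B ∈ cosetsOf Pstar, hdist S (g • (P : Set G)) B < M := by
  obtain ⟨Q, hQ, h, hconj⟩ := href.2.1 P hP 1
  rw [conjSub_one] at hconj
  filter_upwards [eventually_forall_hdist_smul_lt hgen (hconj ▸ le_commensurator P)
    (hconj ▸ hfi)] with M hM g
  exact ⟨_, ⟨g * h, Q, hQ, rfl⟩, hM g⟩

lemma eventually_forall_exists_hdist_lt_smul (href : IsRefinement Ps Pstar) {S : Set G}
    (hgen : Subgroup.closure S = ⊤) (hfi : ∀ P ∈ Ps, P.relIndex (commensurator P) ≠ 0)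
    {Q : Subgroup G} (hQ : Q ∈ Pstar) :
    ∀ᶠ M : ℕ in atTop, ∀ x : G, ∃ A ∈ cosetsOf Ps, hdist S A (x • (Q : Set G)) < M := by
  obtain ⟨P, hP, g, hQP⟩ := href.1 Q hQ
  have hconj := conjSub_inv_eq_commensurator hQP
  filter_upwards [eventually_forall_hdist_smul_lt hgen (hconj ▸ le_commensurator P)
    (hconj ▸ hfi P hP)] with M hM x
  exact ⟨_, ⟨x * g, P, hP, rfl⟩, by simpa using hM (x * g)⟩

end IsRefinement

theorem id_qiPair_refinement_general (S : Set G) (hgen : Subgroup.closure S = ⊤)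
    (Ps Pstar : Set (Subgroup G)) (hPs : Ps.Finite)
    (hfi : ∀ P ∈ Ps, P.relIndex (Subgroup.Commensurable.commensurator P) ≠ 0)
    (href : IsRefinement Ps Pstar) :
    ∃ L C M : ℕ, IsQIPair S S (id : G → G) Ps Pstar L C M := by
  have hfwd := hPs.eventually_all.2 fun P hP =>
    href.eventually_forall_exists_hdist_smul_lt hgen hP (hfi P hP)
  have hbwd := (href.finite hPs).eventually_all.2 fun Q hQ =>
    href.eventually_forall_exists_hdist_lt_smul hgen hfi hQ
  obtain ⟨M, hfwdM, hbwdM⟩ := (hfwd.and hbwd).exists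
  refine ⟨1, 0, M, fun a b => by simp, fun h => ⟨h, (wordDist_self h).le⟩, ?_, ?_⟩
  · rintro _ ⟨g, P, hP, rfl⟩
    simpa using hfwdM P hP g
  · rintro _ ⟨x, Q, hQ, rfl⟩
    simpa using hbwdM Q hQ x

/-- If every member of the finite collection `Ps` has finite index in its
commensurator and `Pstar` is a refinement of `Ps`, then the identity map of `G` is a
quasi-isometry of pairs `(G, Ps) → (G, Pstar)`. -/
theorem id_qiPair_refinement (S : Set G) (hS : S.Finite) (hgen : Subgroup.closure S = ⊤)
    (Ps Pstar : Set (Subgroup G)) (hPs : Ps.Finite)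
    (hfi : ∀ P ∈ Ps, P.relIndex (Subgroup.Commensurable.commensurator P) ≠ 0)
    (href : IsRefinement Ps Pstar) :
    ∃ L C M : ℕ, IsQIPair S S (id : G → G) Ps Pstar L C M :=
  id_qiPair_refinement_general S hgen Ps Pstar hPs hfi href
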